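/- For every i ≥ 1, the pushforward of ρ by T_{ν_i} equals ν_i, and T_{ν_i} minimizes the quadratic Monge cost: for every Borel map S : ℝ^d → ℝ^d whose pushforward of ρ equals ν_i, one has ∫ |x − S(x)|² dρ(x) ≥ ∫ |x − T_{ν_i}(x)|² dρ(x). -/

import Mathlib

open MeasureTheory Metric
open Finset
open scoped ENNReal


-- auxiliary: volume and measurability of coordinate boxes in EuclideanSpace
lemma aux_box_vol (d : ℕ) (s : Fin d → Set ℝ) (hs : ∀ k, MeasurableSet (s k)) :
    volume {x : EuclideanSpace ℝ (Fin d) | ∀ k, x k ∈ s k} = ∏ k, volume (s k) := by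
  have h := (EuclideanSpace.volume_preserving_symm_measurableEquiv_toLp (Fin d))
  have heq : {x : EuclideanSpace ℝ (Fin d) | ∀ k, x k ∈ s k}
      = ((MeasurableEquiv.toLp 2 (Fin d → ℝ)).symm) ⁻¹' (Set.pi Set.univ s) := by
    ext x; simp [Set.mem_pi, MeasurableEquiv.coe_toLp_symm]
  rw [heq, h.measure_preimage (MeasurableSet.univ_pi hs).nullMeasurableSet, volume_pi_pi]

lemma aux_box_meas (d : ℕ) (s : Fin d → Set ℝ) (hs : ∀ k, MeasurableSet (s k)) :
    MeasurableSet {x : EuclideanSpace ℝ (Fin d) | ∀ k, x k ∈ s k} := by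
  have heq : {x : EuclideanSpace ℝ (Fin d) | ∀ k, x k ∈ s k}
      = ((MeasurableEquiv.toLp 2 (Fin d → ℝ)).symm) ⁻¹' (Set.pi Set.univ s) := by
    ext x; simp [Set.mem_pi, MeasurableEquiv.coe_toLp_symm]
  rw [heq]
  exact ((MeasurableEquiv.toLp 2 (Fin d → ℝ)).symm).measurable (MeasurableSet.univ_pi hs)

-- auxiliary : distance comparison via the first two coordinates
lemma aux_dist_cmp (d : ℕ) (e0 e1 : Fin d) (hne : e0 ≠ e1)
    (x y z : EuclideanSpace ℝ (Fin d))
    (hyz : ∀ k, k ≠ e0 → k ≠ e1 → y k = z k)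
    (h : (x e0 - y e0)^2 + (x e1 - y e1)^2 ≤ (x e0 - z e0)^2 + (x e1 - z e1)^2) :
    dist x y ≤ dist x z := by
  rw [EuclideanSpace.dist_eq, EuclideanSpace.dist_eq]
  apply Real.sqrt_le_sqrt
  have hsplit : ∀ v : EuclideanSpace ℝ (Fin d), ∑ k, dist (x k) (v k) ^ 2
      = (x e0 - v e0)^2 + ((x e1 - v e1)^2
        + ∑ k ∈ (univ.erase e0).erase e1, (x k - v k)^2) := by
    intro v
    rw [← Finset.add_sum_erase _ _ (mem_univ e0),
      ← Finset.add_sum_erase _ _ (Finset.mem_erase.2 ⟨hne.symm, mem_univ e1⟩)]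
    simp [Real.dist_eq, sq_abs]
  rw [hsplit y, hsplit z]
  have hr : ∑ k ∈ (univ.erase e0).erase e1, (x k - y k)^2
      = ∑ k ∈ (univ.erase e0).erase e1, (x k - z k)^2 := by
    refine Finset.sum_congr rfl fun k hk => ?_
    rcases Finset.mem_erase.1 hk with ⟨hk1, hk2⟩
    rcases Finset.mem_erase.1 hk2 with ⟨hk0, _⟩
    rw [hyz k hk0 hk1]
  rw [hr]
  linarith

set_option maxHeartbeats 4000000 in
/-- For every `i`, the map `T_{ν_i}` (equal to `T_μ` outside `S_i`, to `C_i^+` on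
`A_i^+ + Q(ℓ_i, r_i)` and to `C_i^-` on `A_i^- - Q(ℓ_i, r_i)`) pushes `ρ` forward to
`ν_i` and minimizes the quadratic Monge cost among all transport maps from `ρ` to
`ν_i`. -/
theorem stmt14 (d : ℕ) (hd : 2 ≤ d)
    (ℓ r w u : ℕ → ℝ)
    (hℓ : ∀ i, 0 < ℓ i) (hr : ∀ i, 0 < r i) (hw : ∀ i, 0 < w i)
    (hsep : ∀ i, 100 * max (ℓ i) (max (r i) (w i)) ≤ u (i + 1) - u i)
    (hsep' : ∀ i, 100 * max (ℓ (i + 1)) (max (r (i + 1)) (w (i + 1))) ≤ u (i + 1) - u i)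
    (hwr : ∀ i, 100 * r i ≤ w i)
    (Q : ℝ → ℝ → Set (EuclideanSpace ℝ (Fin d)))
    (hQ : ∀ L R : ℝ, Q L R = {x : EuclideanSpace ℝ (Fin d) |
      0 < x ⟨0, by omega⟩ ∧ x ⟨0, by omega⟩ < L ∧ |x ⟨1, by omega⟩| < R / 2 ∧
      ∀ j : Fin d, 2 ≤ (j : ℕ) → |x j| < 1 / 2})
    (Ap Am Bp Bm Cp Cm : ℕ → EuclideanSpace ℝ (Fin d))
    (hAp : ∀ i, Ap i = EuclideanSpace.single (⟨0, by omega⟩ : Fin d) (u i + w i))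
    (hAm : ∀ i, Am i = EuclideanSpace.single (⟨0, by omega⟩ : Fin d) (u i - w i))
    (hBp : ∀ i, Bp i = EuclideanSpace.single (⟨0, by omega⟩ : Fin d) (u i) +
      EuclideanSpace.single (⟨1, by omega⟩ : Fin d) (w i))
    (hBm : ∀ i, Bm i = EuclideanSpace.single (⟨0, by omega⟩ : Fin d) (u i) -
      EuclideanSpace.single (⟨1, by omega⟩ : Fin d) (w i))
    (hCp : ∀ i, Cp i = EuclideanSpace.single (⟨0, by omega⟩ : Fin d) (u i + r i) +
      EuclideanSpace.single (⟨1, by omega⟩ : Fin d) (w i))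
    (hCm : ∀ i, Cm i = EuclideanSpace.single (⟨0, by omega⟩ : Fin d) (u i - r i) -
      EuclideanSpace.single (⟨1, by omega⟩ : Fin d) (w i))
    (S : ℕ → Set (EuclideanSpace ℝ (Fin d)))
    (hS : ∀ i, S i =
      (fun q => Ap i + q) '' Q (ℓ i) (r i) ∪ (fun q => Am i - q) '' Q (ℓ i) (r i))
    (X : Set (EuclideanSpace ℝ (Fin d))) (hX : X = ⋃ i, S i)
    (ρ : Measure (EuclideanSpace ℝ (Fin d))) (hprob : IsProbabilityMeasure ρ)
    (g : EuclideanSpace ℝ (Fin d) → ℝ≥0∞) (hgmeas : Measurable g)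
    (hρ : ρ = volume.withDensity g)
    (hgsupp : ∀ x ∉ closure X, g x = 0)
    (hgconst : ∀ i, ∃ c : ℝ≥0∞, ∀ x ∈ S i, g x = c)
    (σ : ℕ → ℝ≥0∞) (hσ : ∀ i, σ i = ρ ((fun q => Ap i + q) '' Q (ℓ i) (r i)))
    (ν : ℕ → Measure (EuclideanSpace ℝ (Fin d)))
    (hν : ∀ i, ν i = Measure.sum fun j => σ j •
      (Measure.dirac (if j = i then Cp j else Bp j) +
        Measure.dirac (if j = i then Cm j else Bm j)))
    (T : EuclideanSpace ℝ (Fin d) → EuclideanSpace ℝ (Fin d))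
    (hT : ∀ j, ∀ x ∈ S j, T x = if 0 ≤ x ⟨1, by omega⟩ then Bp j else Bm j)
    (Tν : ℕ → EuclideanSpace ℝ (Fin d) → EuclideanSpace ℝ (Fin d))
    (hTνmeas : ∀ i, Measurable (Tν i))
    (hTν₁ : ∀ i, ∀ x ∈ X \ S i, Tν i x = T x)
    (hTν₂ : ∀ i, ∀ x ∈ (fun q => Ap i + q) '' Q (ℓ i) (r i), Tν i x = Cp i)
    (hTν₃ : ∀ i, ∀ x ∈ (fun q => Am i - q) '' Q (ℓ i) (r i), Tν i x = Cm i)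
    (i : ℕ) :
    ρ.map (Tν i) = ν i ∧
    ∀ S' : EuclideanSpace ℝ (Fin d) → EuclideanSpace ℝ (Fin d),
      Measurable S' → ρ.map S' = ν i →
      ∫⁻ x, ENNReal.ofReal (dist x (Tν i x) ^ 2) ∂ρ ≤
        ∫⁻ x, ENNReal.ofReal (dist x (S' x) ^ 2) ∂ρ := by
  classical
  have h0d : 0 < d := by omega
  have h1d : 1 < d := by omega
  set e0 : Fin d := ⟨0, h0d⟩ with he0
  set e1 : Fin d := ⟨1, h1d⟩ with he1
  have hne01 : e0 ≠ e1 := by simp [he0, he1, Fin.ext_iff]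
  set m : ℕ → ℝ := fun j => max (ℓ j) (max (r j) (w j)) with hm
  have hmℓ : ∀ j, ℓ j ≤ m j := fun j => le_max_left _ _
  have hmr : ∀ j, r j ≤ m j := fun j => le_trans (le_max_left _ _) (le_max_right _ _)
  have hmw : ∀ j, w j ≤ m j := fun j => le_trans (le_max_right _ _) (le_max_right _ _)
  have hm0 : ∀ j, 0 < m j := fun j => lt_of_lt_of_le (hℓ j) (hmℓ j)
  have hstep : ∀ j, u j + 10 * m j ≤ u (j + 1) - 10 * m (j + 1) := by
    intro j
    have h1 : 100 * m j ≤ u (j + 1) - u j := hsep j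
    have h2 : 100 * m (j + 1) ≤ u (j + 1) - u j := hsep' j
    have h3 := hm0 j
    have h4 := hm0 (j + 1)
    linarith
  have hvmono : StrictMono (fun j => u j - 10 * m j) := by
    apply strictMono_nat_of_lt_succ
    intro j
    have h1 := hstep j
    have h2 := hm0 j
    show u j - 10 * m j < u (j + 1) - 10 * m (j + 1)
    linarith
  have hgap : ∀ j k, j < k → u j + 10 * m j ≤ u k - 10 * m k := by
    intro j k hjk
    refine (hstep j).trans ?_
    have := hvmono.monotone (Nat.succ_le_of_lt hjk)
    simpa using this
  -- coordinates of sums of singles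
  have coordAdd : ∀ (a b : ℝ) (k : Fin d),
      (EuclideanSpace.single e0 a + EuclideanSpace.single e1 b) k
        = if k = e0 then a else if k = e1 then b else 0 := by
    intro a b k
    show (EuclideanSpace.single e0 a) k + (EuclideanSpace.single e1 b) k = _
    rw [EuclideanSpace.single_apply, EuclideanSpace.single_apply]
    by_cases h0 : k = e0
    · subst h0; simp [hne01]
    · by_cases h1 : k = e1
      · subst h1; simp [Ne.symm hne01]
      · simp [h0, h1]
  have coordSub : ∀ (a b : ℝ) (k : Fin d),
      (EuclideanSpace.single e0 a - EuclideanSpace.single e1 b) k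
        = if k = e0 then a else if k = e1 then -b else 0 := by
    intro a b k
    show (EuclideanSpace.single e0 a) k - (EuclideanSpace.single e1 b) k = _
    rw [EuclideanSpace.single_apply, EuclideanSpace.single_apply]
    by_cases h0 : k = e0
    · subst h0; simp [hne01]
    · by_cases h1 : k = e1
      · subst h1; simp [Ne.symm hne01]
      · simp [h0, h1]
  -- coordinates of the distinguished points
  have hBpc : ∀ j k, Bp j k = if k = e0 then u j else if k = e1 then w j else 0 := by
    intro j k; rw [hBp j]; exact coordAdd _ _ k
  have hBmc : ∀ j k, Bm j k = if k = e0 then u j else if k = e1 then -(w j) else 0 := by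
    intro j k; rw [hBm j]; exact coordSub _ _ k
  have hCpc : ∀ j k, Cp j k = if k = e0 then u j + r j else if k = e1 then w j else 0 := by
    intro j k; rw [hCp j]; exact coordAdd _ _ k
  have hCmc : ∀ j k, Cm j k = if k = e0 then u j - r j else if k = e1 then -(w j) else 0 := by
    intro j k; rw [hCm j]; exact coordSub _ _ k
  have hApc : ∀ j k, Ap j k = if k = e0 then u j + w j else 0 := by
    intro j k; rw [hAp j]; exact EuclideanSpace.single_apply _ _ _
  have hAmc : ∀ j k, Am j k = if k = e0 then u j - w j else 0 := by
    intro j k; rw [hAm j]; exact EuclideanSpace.single_apply _ _ _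
  -- membership in Q via coordinates
  have hQmem : ∀ (L R : ℝ) (x : EuclideanSpace ℝ (Fin d)), x ∈ Q L R ↔
      (0 < x e0 ∧ x e0 < L ∧ |x e1| < R / 2 ∧ ∀ k : Fin d, 2 ≤ (k : ℕ) → |x k| < 1 / 2) := by
    intro L R x
    rw [hQ L R]
    exact Iff.rfl
  -- the box machinery
  set fam : Set ℝ → Set ℝ → Fin d → Set ℝ := fun s0 s1 k =>
    if k = e0 then s0 else if k = e1 then s1 else Set.Ioo (-(1/2) : ℝ) (1/2) with hfam
  set box : Set ℝ → Set ℝ → Set (EuclideanSpace ℝ (Fin d)) := fun s0 s1 =>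
    {x | ∀ k, x k ∈ fam s0 s1 k} with hbox
  have hfam0 : ∀ s0 s1, fam s0 s1 e0 = s0 := by intro s0 s1; simp [hfam]
  have hfam1 : ∀ s0 s1, fam s0 s1 e1 = s1 := by intro s0 s1; simp [hfam, Ne.symm hne01]
  have hfam2 : ∀ s0 s1 (k : Fin d), k ≠ e0 → k ≠ e1 →
      fam s0 s1 k = Set.Ioo (-(1/2) : ℝ) (1/2) := by
    intro s0 s1 k h0 h1; simp [hfam, h0, h1]
  have hboxmem : ∀ s0 s1 (x : EuclideanSpace ℝ (Fin d)), x ∈ box s0 s1 ↔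
      (x e0 ∈ s0 ∧ x e1 ∈ s1 ∧ ∀ k, k ≠ e0 → k ≠ e1 → x k ∈ Set.Ioo (-(1/2) : ℝ) (1/2)) := by
    intro s0 s1 x
    constructor
    · intro h
      refine ⟨by have := h e0; rwa [hfam0] at this, by have := h e1; rwa [hfam1] at this,
        fun k h0 h1 => by have := h k; rwa [hfam2 _ _ _ h0 h1] at this⟩
    · rintro ⟨h1, h2, h3⟩ k
      by_cases hk0 : k = e0
      · subst hk0; rwa [hfam0]
      · by_cases hk1 : k = e1
        · subst hk1; rwa [hfam1]
        · rw [hfam2 _ _ _ hk0 hk1]; exact h3 k hk0 hk1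
  have hboxmeas : ∀ s0 s1, MeasurableSet s0 → MeasurableSet s1 → MeasurableSet (box s0 s1) := by
    intro s0 s1 h0 h1
    apply aux_box_meas
    intro k
    simp only [hfam]
    split_ifs
    exacts [h0, h1, measurableSet_Ioo]
  have hboxvol : ∀ s0 s1, MeasurableSet s0 → MeasurableSet s1 →
      volume (box s0 s1) = volume s0 * volume s1 := by
    intro s0 s1 h0 h1
    rw [hbox]
    rw [aux_box_vol d (fam s0 s1) (by
      intro k; simp only [hfam]; split_ifs; exacts [h0, h1, measurableSet_Ioo])]
    have hfac : ∀ k : Fin d, volume (fam s0 s1 k)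
        = if k = e0 then volume s0 else if k = e1 then volume s1 else 1 := by
      intro k
      simp only [hfam]
      split_ifs <;> simp [Real.volume_Ioo] <;> norm_num
    rw [Finset.prod_congr rfl fun k _ => hfac k]
    rw [← Finset.prod_subset (Finset.subset_univ ({e0, e1} : Finset (Fin d)))
      (by intro k _ hk
          simp only [Finset.mem_insert, Finset.mem_singleton] at hk
          push_neg at hk
          simp [hk.1, hk.2])]
    rw [Finset.prod_pair hne01]
    simp [hne01, Ne.symm hne01]
  -- image sets as boxes
  have h1p : ∀ j, (fun q => Ap j + q) '' Q (ℓ j) (r j)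
      = box (Set.Ioo (u j + w j) (u j + w j + ℓ j)) (Set.Ioo (-(r j / 2)) (r j / 2)) := by
    intro j
    ext x
    rw [hboxmem]
    constructor
    · rintro ⟨q, hq, rfl⟩
      rw [hQmem] at hq
      obtain ⟨hq0, hq1, hq2, hq3⟩ := hq
      dsimp only
      have hcoord : ∀ k, (Ap j + q) k = Ap j k + q k := fun k => rfl
      rw [abs_lt] at hq2
      refine ⟨?_, ?_, ?_⟩
      · rw [hcoord, hApc]; simp; constructor <;> linarith
      · rw [hcoord, hApc]; simp [Ne.symm hne01]; constructor <;> linarith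
      · intro k h0 h1
        have h2k : 2 ≤ (k : ℕ) := by
          rcases k with ⟨kv, hkv⟩
          simp [he0, he1, Fin.ext_iff] at h0 h1
          simp
          omega
        have := hq3 k h2k
        rw [abs_lt] at this
        rw [hcoord, hApc]
        simp [h0, h1]
        constructor <;> linarith [this.1, this.2]
    · rintro ⟨hx0, hx1, hx2⟩
      refine ⟨x - Ap j, ?_, by simp⟩
      rw [hQmem]
      have hcoord : ∀ k, (x - Ap j) k = x k - Ap j k := fun k => rfl
      simp only [Set.mem_Ioo] at hx0 hx1
      refine ⟨?_, ?_, ?_, ?_⟩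
      · rw [hcoord, hApc]; simp; linarith [hx0.1]
      · rw [hcoord, hApc]; simp; linarith [hx0.2]
      · rw [hcoord, hApc, abs_lt]; simp [Ne.symm hne01]; constructor <;> linarith [hx1.1, hx1.2]
      · intro k hk2
        have h0 : k ≠ e0 := by simp [he0, Fin.ext_iff]; omega
        have h1 : k ≠ e1 := by simp [he1, Fin.ext_iff]; omega
        have := hx2 k h0 h1
        simp only [Set.mem_Ioo] at this
        rw [hcoord, hApc, abs_lt]
        simp [h0, h1]
        constructor <;> linarith [this.1, this.2]
  have h1m : ∀ j, (fun q => Am j - q) '' Q (ℓ j) (r j)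
      = box (Set.Ioo (u j - w j - ℓ j) (u j - w j)) (Set.Ioo (-(r j / 2)) (r j / 2)) := by
    intro j
    ext x
    rw [hboxmem]
    constructor
    · rintro ⟨q, hq, rfl⟩
      rw [hQmem] at hq
      obtain ⟨hq0, hq1, hq2, hq3⟩ := hq
      dsimp only
      have hcoord : ∀ k, (Am j - q) k = Am j k - q k := fun k => rfl
      rw [abs_lt] at hq2
      refine ⟨?_, ?_, ?_⟩
      · rw [hcoord, hAmc]; simp; constructor <;> linarith
      · rw [hcoord, hAmc]; simp [Ne.symm hne01]; constructor <;> linarith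
      · intro k h0 h1
        have h2k : 2 ≤ (k : ℕ) := by
          rcases k with ⟨kv, hkv⟩
          simp [he0, he1, Fin.ext_iff] at h0 h1
          simp
          omega
        have := hq3 k h2k
        rw [abs_lt] at this
        rw [hcoord, hAmc]
        simp [h0, h1]
        constructor <;> linarith [this.1, this.2]
    · rintro ⟨hx0, hx1, hx2⟩
      refine ⟨Am j - x, ?_, by simp⟩
      rw [hQmem]
      have hcoord : ∀ k, (Am j - x) k = Am j k - x k := fun k => rfl
      simp only [Set.mem_Ioo] at hx0 hx1
      refine ⟨?_, ?_, ?_, ?_⟩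
      · rw [hcoord, hAmc]; simp; linarith [hx0.2]
      · rw [hcoord, hAmc]; simp; linarith [hx0.1]
      · rw [hcoord, hAmc, abs_lt]; simp [Ne.symm hne01]; constructor <;> linarith [hx1.1, hx1.2]
      · intro k hk2
        have h0 : k ≠ e0 := by simp [he0, Fin.ext_iff]; omega
        have h1 : k ≠ e1 := by simp [he1, Fin.ext_iff]; omega
        have := hx2 k h0 h1
        simp only [Set.mem_Ioo] at this
        rw [hcoord, hAmc, abs_lt]
        simp [h0, h1]
        constructor <;> linarith [this.1, this.2]
  -- abbreviations for the boxes
  set Pp : ℕ → Set (EuclideanSpace ℝ (Fin d)) := fun j =>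
    box (Set.Ioo (u j + w j) (u j + w j + ℓ j)) (Set.Ioo (-(r j / 2)) (r j / 2)) with hPp
  set Pm : ℕ → Set (EuclideanSpace ℝ (Fin d)) := fun j =>
    box (Set.Ioo (u j - w j - ℓ j) (u j - w j)) (Set.Ioo (-(r j / 2)) (r j / 2)) with hPm
  have hSj : ∀ j, S j = Pp j ∪ Pm j := by
    intro j; rw [hS j, h1p j, h1m j]
  -- coordinate bounds for points of S j
  have hSbound : ∀ j x, x ∈ S j → |x e0 - u j| ≤ 2 * m j ∧ |x e1| ≤ m j / 2 := by
    intro j x hx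
    rw [hSj j] at hx
    have h1 := hmℓ j; have h2 := hmr j; have h3 := hmw j; have h4 := hm0 j
    have h5 := hw j; have h6 := hr j; have h7 := hℓ j
    rcases hx with hx | hx <;>
    · rw [hboxmem] at hx
      obtain ⟨hx0, hx1, -⟩ := hx
      simp only [Set.mem_Ioo] at hx0 hx1
      rw [abs_le, abs_le]
      refine ⟨⟨by linarith [hx0.1, hx0.2], by linarith [hx0.1, hx0.2]⟩,
        by linarith [hx1.1, hx1.2], by linarith [hx1.1, hx1.2]⟩
  -- disjointness of the S j
  have hSdisj : ∀ j k, j ≠ k → Disjoint (S j) (S k) := by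
    intro j k hjk
    rw [Set.disjoint_left]
    intro x hxj hxk
    have hbj := (hSbound j x hxj).1
    have hbk := (hSbound k x hxk).1
    rw [abs_le] at hbj hbk
    rcases Nat.lt_or_ge j k with h | h
    · have := hgap j k h
      have := hm0 j; have := hm0 k
      linarith [hbj.1, hbj.2, hbk.1, hbk.2]
    · have hkj : k < j := by omega
      have := hgap k j hkj
      have := hm0 j; have := hm0 k
      linarith [hbj.1, hbj.2, hbk.1, hbk.2]
  -- measurability of the pieces
  have hmIoo : ∀ a b : ℝ, MeasurableSet (Set.Ioo a b) := fun a b => measurableSet_Ioo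
  have hPpmeas : ∀ j, MeasurableSet (Pp j) := fun j => hboxmeas _ _ (hmIoo _ _) (hmIoo _ _)
  have hPmmeas : ∀ j, MeasurableSet (Pm j) := fun j => hboxmeas _ _ (hmIoo _ _) (hmIoo _ _)
  have hSmeas : ∀ j, MeasurableSet (S j) := fun j => by
    rw [hSj j]; exact (hPpmeas j).union (hPmmeas j)
  -- the density is constant on each S j
  choose c hc using hgconst
  have hρsub : ∀ j (A : Set (EuclideanSpace ℝ (Fin d))), MeasurableSet A → A ⊆ S j →
      ρ A = c j * volume A := by
    intro j A hA hsub
    rw [hρ, withDensity_apply _ hA,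
      setLIntegral_congr_fun hA (fun x hx => hc j x (hsub hx)),
      setLIntegral_const]
  -- volumes
  have hvolPp : ∀ j, volume (Pp j) = ENNReal.ofReal (ℓ j) * ENNReal.ofReal (r j) := by
    intro j
    rw [hPp]
    rw [hboxvol _ _ (hmIoo _ _) (hmIoo _ _), Real.volume_Ioo, Real.volume_Ioo]
    congr 1
    · ring_nf
    · congr 1; ring
  have hvolPm : ∀ j, volume (Pm j) = ENNReal.ofReal (ℓ j) * ENNReal.ofReal (r j) := by
    intro j
    rw [hPm]
    rw [hboxvol _ _ (hmIoo _ _) (hmIoo _ _), Real.volume_Ioo, Real.volume_Ioo]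
    congr 1
    · congr 1; ring
    · congr 1; ring
  have hσval : ∀ j, σ j = c j * (ENNReal.ofReal (ℓ j) * ENNReal.ofReal (r j)) := by
    intro j
    rw [hσ j, h1p j, ← hvolPp j]
    exact hρsub j _ (hPpmeas j) (by rw [hSj j]; exact Set.subset_union_left)
  have hρPm : ∀ j, ρ (Pm j) = σ j := by
    intro j
    rw [hσval j, ← hvolPm j]
    exact hρsub j _ (hPmmeas j) (by rw [hSj j]; exact Set.subset_union_right)
  have hρPp : ∀ j, ρ (Pp j) = σ j := by
    intro j
    rw [hσval j, ← hvolPp j]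
    exact hρsub j _ (hPpmeas j) (by rw [hSj j]; exact Set.subset_union_left)
  -- disjointness of boxes via a coordinate
  have hboxdisj0 : ∀ s0 s0' s1 s1' : Set ℝ, Disjoint s0 s0' →
      Disjoint (box s0 s1) (box s0' s1') := by
    intro s0 s0' s1 s1' h
    rw [Set.disjoint_left]
    intro x hx hx'
    rw [hboxmem] at hx hx'
    exact Set.disjoint_left.1 h hx.1 hx'.1
  have hboxdisj1 : ∀ s0 s0' s1 s1' : Set ℝ, Disjoint s1 s1' →
      Disjoint (box s0 s1) (box s0' s1') := by
    intro s0 s0' s1 s1' h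
    rw [Set.disjoint_left]
    intro x hx hx'
    rw [hboxmem] at hx hx'
    exact Set.disjoint_left.1 h hx.2.1 hx'.2.1
  have hPpPmdisj : ∀ j, Disjoint (Pp j) (Pm j) := by
    intro j
    apply hboxdisj0
    rw [Set.disjoint_left]
    intro a ha ha'
    simp only [Set.mem_Ioo] at ha ha'
    have := hw j
    linarith [ha.1, ha'.2]
  -- half boxes
  set PpPos : ℕ → Set (EuclideanSpace ℝ (Fin d)) := fun j =>
    box (Set.Ioo (u j + w j) (u j + w j + ℓ j)) (Set.Ico 0 (r j / 2)) with hPpPos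
  set PpNeg : ℕ → Set (EuclideanSpace ℝ (Fin d)) := fun j =>
    box (Set.Ioo (u j + w j) (u j + w j + ℓ j)) (Set.Ioo (-(r j / 2)) 0) with hPpNeg
  set PmPos : ℕ → Set (EuclideanSpace ℝ (Fin d)) := fun j =>
    box (Set.Ioo (u j - w j - ℓ j) (u j - w j)) (Set.Ico 0 (r j / 2)) with hPmPos
  set PmNeg : ℕ → Set (EuclideanSpace ℝ (Fin d)) := fun j =>
    box (Set.Ioo (u j - w j - ℓ j) (u j - w j)) (Set.Ioo (-(r j / 2)) 0) with hPmNeg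
  have hIoosplit : ∀ a : ℝ, 0 < a → Set.Ioo (-a) a = Set.Ioo (-a) 0 ∪ Set.Ico 0 a := by
    intro a ha
    ext t
    simp only [Set.mem_Ioo, Set.mem_union, Set.mem_Ico]
    constructor
    · rintro ⟨h1, h2⟩
      rcases lt_or_ge t 0 with h | h
      · exact Or.inl ⟨h1, h⟩
      · exact Or.inr ⟨h, h2⟩
    · rintro (⟨h1, h2⟩ | ⟨h1, h2⟩)
      · exact ⟨h1, by linarith⟩
      · exact ⟨by linarith, h2⟩
  have hboxunion : ∀ (s0 : Set ℝ) (s1 s1' s1'' : Set ℝ), s1 = s1' ∪ s1'' →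
      box s0 s1 = box s0 s1' ∪ box s0 s1'' := by
    intro s0 s1 s1' s1'' h
    ext x
    rw [Set.mem_union, hboxmem, hboxmem, hboxmem, h]
    constructor
    · rintro ⟨h0, h1, h2⟩
      rcases h1 with h1 | h1
      · exact Or.inl ⟨h0, h1, h2⟩
      · exact Or.inr ⟨h0, h1, h2⟩
    · rintro (⟨h0, h1, h2⟩ | ⟨h0, h1, h2⟩)
      · exact ⟨h0, Or.inl h1, h2⟩
      · exact ⟨h0, Or.inr h1, h2⟩
  have hPpsplit : ∀ j, Pp j = PpNeg j ∪ PpPos j :=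
    fun j => hboxunion _ _ _ _ (hIoosplit _ (half_pos (hr j)))
  have hPmsplit : ∀ j, Pm j = PmNeg j ∪ PmPos j :=
    fun j => hboxunion _ _ _ _ (hIoosplit _ (half_pos (hr j)))
  have hmIco : ∀ a b : ℝ, MeasurableSet (Set.Ico a b) := fun a b => measurableSet_Ico
  have hPpPosmeas : ∀ j, MeasurableSet (PpPos j) := fun j => hboxmeas _ _ (hmIoo _ _) (hmIco _ _)
  have hPpNegmeas : ∀ j, MeasurableSet (PpNeg j) := fun j => hboxmeas _ _ (hmIoo _ _) (hmIoo _ _)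
  have hPmPosmeas : ∀ j, MeasurableSet (PmPos j) := fun j => hboxmeas _ _ (hmIoo _ _) (hmIco _ _)
  have hPmNegmeas : ∀ j, MeasurableSet (PmNeg j) := fun j => hboxmeas _ _ (hmIoo _ _) (hmIoo _ _)
  -- measures of half boxes
  have hhalf : ∀ j, ρ (PpPos j) = c j * (ENNReal.ofReal (ℓ j) * ENNReal.ofReal (r j / 2))
      ∧ ρ (PpNeg j) = c j * (ENNReal.ofReal (ℓ j) * ENNReal.ofReal (r j / 2))
      ∧ ρ (PmPos j) = c j * (ENNReal.ofReal (ℓ j) * ENNReal.ofReal (r j / 2))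
      ∧ ρ (PmNeg j) = c j * (ENNReal.ofReal (ℓ j) * ENNReal.ofReal (r j / 2)) := by
    intro j
    have hsub1 : PpPos j ⊆ S j := by
      rw [hSj j, hPpsplit j]
      exact Set.subset_union_left.trans' Set.subset_union_right
    have hsub2 : PpNeg j ⊆ S j := by
      rw [hSj j, hPpsplit j]
      exact Set.subset_union_left.trans' Set.subset_union_left
    have hsub3 : PmPos j ⊆ S j := by
      rw [hSj j, hPmsplit j]
      exact Set.subset_union_right.trans' Set.subset_union_right
    have hsub4 : PmNeg j ⊆ S j := by
      rw [hSj j, hPmsplit j]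
      exact Set.subset_union_right.trans' Set.subset_union_left
    refine ⟨?_, ?_, ?_, ?_⟩
    · rw [hρsub j _ (hPpPosmeas j) hsub1, hboxvol _ _ (hmIoo _ _) (hmIco _ _),
        Real.volume_Ioo, Real.volume_Ico]
      congr 2
      · ring_nf
      · ring_nf
    · rw [hρsub j _ (hPpNegmeas j) hsub2, hboxvol _ _ (hmIoo _ _) (hmIoo _ _),
        Real.volume_Ioo, Real.volume_Ioo]
      congr 2
      · ring_nf
      · ring_nf
    · rw [hρsub j _ (hPmPosmeas j) hsub3, hboxvol _ _ (hmIoo _ _) (hmIco _ _),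
        Real.volume_Ioo, Real.volume_Ico]
      congr 2
      · ring_nf
      · ring_nf
    · rw [hρsub j _ (hPmNegmeas j) hsub4, hboxvol _ _ (hmIoo _ _) (hmIoo _ _),
        Real.volume_Ioo, Real.volume_Ioo]
      congr 2
      · ring_nf
      · ring_nf
  have hhalfsum : ∀ j, c j * (ENNReal.ofReal (ℓ j) * ENNReal.ofReal (r j / 2))
      + c j * (ENNReal.ofReal (ℓ j) * ENNReal.ofReal (r j / 2)) = σ j := by
    intro j
    rw [hσval j, ← mul_add, ← mul_add, ← ENNReal.ofReal_add (by linarith [hr j]) (by linarith [hr j])]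
    norm_num
  -- values of Tν on the pieces
  have hXmem : ∀ j x, x ∈ S j → x ∈ X := by
    intro j x hx
    rw [hX]
    exact Set.mem_iUnion.2 ⟨j, hx⟩
  have hTvp : ∀ x ∈ Pp i, Tν i x = Cp i := by
    intro x hx
    exact hTν₂ i x (by rw [h1p i]; exact hx)
  have hTvm : ∀ x ∈ Pm i, Tν i x = Cm i := by
    intro x hx
    exact hTν₃ i x (by rw [h1m i]; exact hx)
  have hTvj : ∀ j, j ≠ i → ∀ x ∈ S j, Tν i x = if 0 ≤ x e1 then Bp j else Bm j := by
    intro j hji x hx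
    rw [hTν₁ i x ⟨hXmem j x hx, fun hxi => Set.disjoint_left.1 (hSdisj j i hji) hx hxi⟩]
    exact hT j x hx
  -- null boundary of boxes
  have hprodeval : ∀ (v0 v1 : ℝ≥0∞) (f : Fin d → ℝ≥0∞), f e0 = v0 → f e1 = v1 →
      (∀ k, k ≠ e0 → k ≠ e1 → f k = 1) → ∏ k, f k = v0 * v1 := by
    intro v0 v1 f h0 h1 hrest
    rw [← Finset.prod_subset (Finset.subset_univ ({e0, e1} : Finset (Fin d)))
      (by intro k _ hk
          simp only [Finset.mem_insert, Finset.mem_singleton] at hk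
          push_neg at hk
          exact hrest k hk.1 hk.2)]
    rw [Finset.prod_pair hne01, h0, h1]
  have hclbox : ∀ a b a' b' : ℝ, a ≤ b → a' ≤ b' →
      volume (closure (box (Set.Ioo a b) (Set.Ioo a' b')) \ box (Set.Ioo a b) (Set.Ioo a' b')) = 0 := by
    intro a b a' b' hab hab'
    set sC : Fin d → Set ℝ := fun k =>
      if k = e0 then Set.Icc a b else if k = e1 then Set.Icc a' b' else Set.Icc (-(1/2) : ℝ) (1/2)
      with hsC
    set C : Set (EuclideanSpace ℝ (Fin d)) := {x | ∀ k, x k ∈ sC k} with hC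
    have hsub : box (Set.Ioo a b) (Set.Ioo a' b') ⊆ C := by
      intro x hx
      rw [hboxmem] at hx
      intro k
      simp only [hsC]
      split_ifs with hk0 hk1
      · subst hk0; exact Set.Ioo_subset_Icc_self hx.1
      · subst hk1; exact Set.Ioo_subset_Icc_self hx.2.1
      · exact Set.Ioo_subset_Icc_self (hx.2.2 k hk0 hk1)
    have hCclosed : IsClosed C := by
      have : C = ⋂ k, (fun x : EuclideanSpace ℝ (Fin d) => x k) ⁻¹' (sC k) := by
        ext x; simp [hC, Set.mem_iInter]
      rw [this]
      refine isClosed_iInter fun k => IsClosed.preimage (EuclideanSpace.proj k).continuous ?_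
      simp only [hsC]
      split_ifs <;> exact isClosed_Icc
    have hclsub : closure (box (Set.Ioo a b) (Set.Ioo a' b')) ⊆ C :=
      closure_minimal hsub hCclosed
    have hCvol : volume C = ENNReal.ofReal (b - a) * ENNReal.ofReal (b' - a') := by
      rw [hC, aux_box_vol d sC (by
        intro k; simp only [hsC]; split_ifs <;> exact measurableSet_Icc)]
      refine hprodeval _ _ _ ?_ ?_ ?_
      · simp [hsC, Real.volume_Icc]
      · simp [hsC, Ne.symm hne01, Real.volume_Icc]
      · intro k h0 h1
        simp [hsC, h0, h1, Real.volume_Icc]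
        norm_num
    have hboxvol' : volume (box (Set.Ioo a b) (Set.Ioo a' b'))
        = ENNReal.ofReal (b - a) * ENNReal.ofReal (b' - a') := by
      rw [hboxvol _ _ (hmIoo _ _) (hmIoo _ _), Real.volume_Ioo, Real.volume_Ioo]
    refine measure_mono_null (Set.diff_subset_diff_left hclsub) ?_
    rw [measure_diff hsub (hboxmeas _ _ (hmIoo _ _) (hmIoo _ _)).nullMeasurableSet
      (by rw [hboxvol']; exact ENNReal.mul_ne_top ENNReal.ofReal_ne_top ENNReal.ofReal_ne_top),
      hCvol, hboxvol', tsub_self]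
  have hSclnull : ∀ j, volume (closure (S j) \ S j) = 0 := by
    intro j
    have h1 : closure (S j) \ S j ⊆
        (closure (Pp j) \ Pp j) ∪ (closure (Pm j) \ Pm j) := by
      intro x hx
      rcases hx with ⟨hx1, hx2⟩
      rw [hSj j, closure_union] at hx1
      rw [hSj j] at hx2
      rcases hx1 with h | h
      · exact Or.inl ⟨h, fun hh => hx2 (Or.inl hh)⟩
      · exact Or.inr ⟨h, fun hh => hx2 (Or.inr hh)⟩
    refine measure_mono_null h1 (measure_union_null ?_ ?_)
    · exact hclbox _ _ _ _ (by have := hℓ j; have := hw j; linarith)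
        (by have := hr j; linarith)
    · exact hclbox _ _ _ _ (by have := hℓ j; have := hw j; linarith)
        (by have := hr j; linarith)
  have hplane : ∀ cc : ℝ, volume {x : EuclideanSpace ℝ (Fin d) | x e0 = cc} = 0 := by
    intro cc
    have heq : {x : EuclideanSpace ℝ (Fin d) | x e0 = cc}
        = {x : EuclideanSpace ℝ (Fin d) | ∀ k, x k ∈
            (fun k => if k = e0 then ({cc} : Set ℝ) else Set.univ) k} := by
      ext x
      simp only [Set.mem_setOf_eq]
      constructor
      · intro h k
        by_cases hk : k = e0
        · subst hk; simp [h]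
        · simp [hk]
      · intro h
        have := h e0
        simpa using this
    rw [heq, aux_box_vol d _ (by
      intro k; by_cases hk : k = e0 <;> simp [hk, MeasurableSet.singleton])]
    refine Finset.prod_eq_zero (Finset.mem_univ e0) ?_
    simp
  -- the closure of X is almost X
  have hcont0 : Continuous (fun x : EuclideanSpace ℝ (Fin d) => x e0) :=
    (EuclideanSpace.proj e0).continuous
  have hclX : closure X ⊆ (⋃ j, closure (S j)) ∪
      {x : EuclideanSpace ℝ (Fin d) | x e0 = sSup (Set.range u)} := by
    intro x hx
    by_cases hxJ : ∃ J, x e0 < u J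
    · obtain ⟨J, hJ⟩ := hxJ
      left
      have hXsplit : X ⊆ (⋃ j ∈ Finset.range (J + 1), S j) ∪
          {y : EuclideanSpace ℝ (Fin d) | u J ≤ y e0} := by
        rw [hX]
        intro y hy
        rcases Set.mem_iUnion.1 hy with ⟨k, hk⟩
        by_cases hkJ : k < J + 1
        · exact Or.inl (Set.mem_biUnion (Finset.mem_range.2 hkJ) hk)
        · right
          have hb := (hSbound k y hk).1
          rw [abs_le] at hb
          have h1 : u (J + 1) - 10 * m (J + 1) ≤ u k - 10 * m k := by
            have := hvmono.monotone (by omega : J + 1 ≤ k)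
            simpa using this
          have h2 := hstep J
          have h3 := hm0 k
          have h4 := hm0 J
          simp only [Set.mem_setOf_eq]
          linarith [hb.1]
      have hx2 := closure_mono hXsplit hx
      rw [closure_union] at hx2
      rcases hx2 with h | h
      · rw [Finset.closure_biUnion] at h
        rcases Set.mem_iUnion₂.1 h with ⟨k, _, hk⟩
        exact Set.mem_iUnion.2 ⟨k, hk⟩
      · exfalso
        have hcl : IsClosed {y : EuclideanSpace ℝ (Fin d) | u J ≤ y e0} :=
          isClosed_le continuous_const hcont0
        have := hcl.closure_subset h
        simp only [Set.mem_setOf_eq] at this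
        linarith
    · push_neg at hxJ
      right
      have hbdd : BddAbove (Set.range u) := by
        refine ⟨x e0, ?_⟩
        rintro a ⟨J, rfl⟩
        exact hxJ J
      have hle1 : sSup (Set.range u) ≤ x e0 :=
        csSup_le (Set.range_nonempty u) (by rintro a ⟨J, rfl⟩; exact hxJ J)
      have hle2 : x e0 ≤ sSup (Set.range u) := by
        have hXsub : X ⊆ {y : EuclideanSpace ℝ (Fin d) | y e0 ≤ sSup (Set.range u)} := by
          rw [hX]
          intro y hy
          rcases Set.mem_iUnion.1 hy with ⟨k, hk⟩
          have hb := (hSbound k y hk).1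
          rw [abs_le] at hb
          have h1 : u (k + 1) ≤ sSup (Set.range u) := le_csSup hbdd ⟨k + 1, rfl⟩
          have h2 := hstep k
          have h3 := hm0 k
          have h4 := hm0 (k + 1)
          simp only [Set.mem_setOf_eq]
          linarith [hb.2]
        have hcl : IsClosed {y : EuclideanSpace ℝ (Fin d) | y e0 ≤ sSup (Set.range u)} :=
          isClosed_le hcont0 continuous_const
        exact (closure_minimal hXsub hcl) hx
      exact le_antisymm hle2 hle1
  have hXclnull : volume (closure X \ X) = 0 := by
    have hsub : closure X \ X ⊆ (⋃ j, closure (S j) \ S j) ∪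
        {x : EuclideanSpace ℝ (Fin d) | x e0 = sSup (Set.range u)} := by
      intro x hx
      rcases hx with ⟨hx1, hx2⟩
      rcases hclX hx1 with h | h
      · rcases Set.mem_iUnion.1 h with ⟨k, hk⟩
        exact Or.inl (Set.mem_iUnion.2 ⟨k, hk, fun hh => hx2 (hXmem k x hh)⟩)
      · exact Or.inr h
    refine measure_mono_null hsub (measure_union_null ?_ (hplane _))
    exact measure_iUnion_null fun j => hSclnull j
  have hρXc : ρ Xᶜ = 0 := by
    have hsub : Xᶜ ⊆ (closure X)ᶜ ∪ (closure X \ X) := by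
      intro x hx
      by_cases hcx : x ∈ closure X
      · exact Or.inr ⟨hcx, hx⟩
      · exact Or.inl hcx
    refine measure_mono_null hsub (measure_union_null ?_ ?_)
    · rw [hρ, withDensity_apply _ (isClosed_closure.measurableSet.compl),
        setLIntegral_congr_fun isClosed_closure.measurableSet.compl
          (fun x hx => hgsupp x hx)]
      simp
    · rw [hρ]
      exact (withDensity_absolutelyContinuous volume g) hXclnull
  -- sign facts on half boxes
  have hsgnPpPos : ∀ j x, x ∈ PpPos j → 0 ≤ x e1 :=
    fun j x hx => (((hboxmem _ _ x).1 hx).2.1).1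
  have hsgnPmPos : ∀ j x, x ∈ PmPos j → 0 ≤ x e1 :=
    fun j x hx => (((hboxmem _ _ x).1 hx).2.1).1
  have hsgnPpNeg : ∀ j x, x ∈ PpNeg j → ¬ 0 ≤ x e1 :=
    fun j x hx => not_le.2 (((hboxmem _ _ x).1 hx).2.1).2
  have hsgnPmNeg : ∀ j x, x ∈ PmNeg j → ¬ 0 ≤ x e1 :=
    fun j x hx => not_le.2 (((hboxmem _ _ x).1 hx).2.1).2
  have hdisjNegPos : ∀ a b : ℝ, Disjoint (Set.Ioo a 0) (Set.Ico 0 b) := by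
    intro a b
    rw [Set.disjoint_left]
    rintro t ⟨_, h2⟩ ⟨h3, _⟩
    linarith
  -- Part 1 : the pushforward identity
  have hmap : ρ.map (Tν i) = ν i := by
    rw [hν i]
    refine Measure.ext fun E hE => ?_
    rw [Measure.map_apply (hTνmeas i) hE, Measure.sum_apply _ hE]
    set A := Tν i ⁻¹' E with hA
    have hAmeas : MeasurableSet A := hTνmeas i hE
    have hAX : ρ A = ∑' j, ρ (A ∩ S j) := by
      have h1 : ρ A = ρ (A ∩ X) := by
        refine le_antisymm ?_ (measure_mono Set.inter_subset_left)
        calc ρ A ≤ ρ ((A ∩ X) ∪ Xᶜ) := measure_mono (by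
              intro x hx
              by_cases h : x ∈ X
              exacts [Or.inl ⟨hx, h⟩, Or.inr h])
          _ ≤ ρ (A ∩ X) + ρ Xᶜ := measure_union_le _ _
          _ = ρ (A ∩ X) := by rw [hρXc, add_zero]
      rw [h1, hX, Set.inter_iUnion]
      exact measure_iUnion
        (fun j k hjk => (hSdisj j k hjk).mono Set.inter_subset_right Set.inter_subset_right)
        (fun j => hAmeas.inter (hSmeas j))
    rw [hAX]
    refine tsum_congr fun j => ?_
    rw [Measure.smul_apply, Measure.add_apply, Measure.dirac_apply' _ hE,
      Measure.dirac_apply' _ hE, smul_eq_mul]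
    by_cases hji : j = i
    · subst hji
      simp only [if_pos rfl]
      have hsplit : A ∩ S j = (A ∩ Pp j) ∪ (A ∩ Pm j) := by
        rw [hSj j, Set.inter_union_distrib_left]
      have hAPp : A ∩ Pp j = if Cp j ∈ E then Pp j else ∅ := by
        split_ifs with h
        · ext x
          exact ⟨fun hx => hx.2, fun hx => ⟨by
            show Tν j x ∈ E
            rw [hTvp x hx]; exact h, hx⟩⟩
        · ext x
          simp only [Set.mem_inter_iff, Set.mem_empty_iff_false, iff_false, not_and]
          intro hx1 hx2
          exact h (by rw [← hTvp x hx2]; exact hx1)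
      have hAPm : A ∩ Pm j = if Cm j ∈ E then Pm j else ∅ := by
        split_ifs with h
        · ext x
          exact ⟨fun hx => hx.2, fun hx => ⟨by
            show Tν j x ∈ E
            rw [hTvm x hx]; exact h, hx⟩⟩
        · ext x
          simp only [Set.mem_inter_iff, Set.mem_empty_iff_false, iff_false, not_and]
          intro hx1 hx2
          exact h (by rw [← hTvm x hx2]; exact hx1)
      rw [hsplit, measure_union ((hPpPmdisj j).mono Set.inter_subset_right
        Set.inter_subset_right) (hAmeas.inter (hPmmeas j)), hAPp, hAPm]
      rw [Set.indicator_apply, Set.indicator_apply]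
      split_ifs with h1 h2 h2 <;>
        simp [hρPp j, hρPm j, mul_add, two_mul]
    · simp only [if_neg hji]
      have hsplit : A ∩ S j
          = ((A ∩ PpNeg j) ∪ (A ∩ PpPos j)) ∪ ((A ∩ PmNeg j) ∪ (A ∩ PmPos j)) := by
        rw [hSj j, hPpsplit j, hPmsplit j]
        rw [Set.inter_union_distrib_left, Set.inter_union_distrib_left,
          Set.inter_union_distrib_left]
      have hvNeg : ∀ (P : Set (EuclideanSpace ℝ (Fin d))),
          (∀ x ∈ P, ¬ 0 ≤ x e1) → P ⊆ S j →
          A ∩ P = if Bm j ∈ E then P else ∅ := by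
        intro P hP hPS
        split_ifs with h
        · ext x
          refine ⟨fun hx => hx.2, fun hx => ⟨?_, hx⟩⟩
          show Tν i x ∈ E
          rw [hTvj j hji x (hPS hx), if_neg (hP x hx)]
          exact h
        · ext x
          simp only [Set.mem_inter_iff, Set.mem_empty_iff_false, iff_false, not_and]
          intro hx1 hx2
          refine h ?_
          have : Tν i x ∈ E := hx1
          rwa [hTvj j hji x (hPS hx2), if_neg (hP x hx2)] at this
      have hvPos : ∀ (P : Set (EuclideanSpace ℝ (Fin d))),
          (∀ x ∈ P, 0 ≤ x e1) → P ⊆ S j →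
          A ∩ P = if Bp j ∈ E then P else ∅ := by
        intro P hP hPS
        split_ifs with h
        · ext x
          refine ⟨fun hx => hx.2, fun hx => ⟨?_, hx⟩⟩
          show Tν i x ∈ E
          rw [hTvj j hji x (hPS hx), if_pos (hP x hx)]
          exact h
        · ext x
          simp only [Set.mem_inter_iff, Set.mem_empty_iff_false, iff_false, not_and]
          intro hx1 hx2
          refine h ?_
          have : Tν i x ∈ E := hx1
          rwa [hTvj j hji x (hPS hx2), if_pos (hP x hx2)] at this
      have hsub1 : PpNeg j ⊆ S j := by
        rw [hSj j, hPpsplit j]; exact Set.subset_union_left.trans' Set.subset_union_left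
      have hsub2 : PpPos j ⊆ S j := by
        rw [hSj j, hPpsplit j]; exact Set.subset_union_left.trans' Set.subset_union_right
      have hsub3 : PmNeg j ⊆ S j := by
        rw [hSj j, hPmsplit j]; exact Set.subset_union_right.trans' Set.subset_union_left
      have hsub4 : PmPos j ⊆ S j := by
        rw [hSj j, hPmsplit j]; exact Set.subset_union_right.trans' Set.subset_union_right
      have hd1 : Disjoint (A ∩ PpNeg j) (A ∩ PpPos j) :=
        (hboxdisj1 _ _ _ _ (hdisjNegPos _ _)).mono Set.inter_subset_right Set.inter_subset_right
      have hd2 : Disjoint (A ∩ PmNeg j) (A ∩ PmPos j) :=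
        (hboxdisj1 _ _ _ _ (hdisjNegPos _ _)).mono Set.inter_subset_right Set.inter_subset_right
      have hd3 : Disjoint ((A ∩ PpNeg j) ∪ (A ∩ PpPos j)) ((A ∩ PmNeg j) ∪ (A ∩ PmPos j)) := by
        refine ((hPpPmdisj j).mono ?_ ?_)
        · rw [hPpsplit j]
          exact Set.union_subset_union Set.inter_subset_right Set.inter_subset_right
        · rw [hPmsplit j]
          exact Set.union_subset_union Set.inter_subset_right Set.inter_subset_right
      rw [hsplit, measure_union hd3 ((hAmeas.inter (hPmNegmeas j)).union
        (hAmeas.inter (hPmPosmeas j))),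
        measure_union hd1 (hAmeas.inter (hPpPosmeas j)),
        measure_union hd2 (hAmeas.inter (hPmPosmeas j))]
      rw [hvNeg _ (hsgnPpNeg j) hsub1, hvPos _ (hsgnPpPos j) hsub2,
        hvNeg _ (hsgnPmNeg j) hsub3, hvPos _ (hsgnPmPos j) hsub4]
      obtain ⟨e1', e2', e3', e4'⟩ := hhalf j
      rw [Set.indicator_apply, Set.indicator_apply]
      have hσ2 := hhalfsum j
      split_ifs with h1 h2 h2 <;>
        simp only [measure_empty, Pi.one_apply, mul_zero, mul_one, mul_add, add_zero,
          zero_add, e1', e2', e3', e4'] <;>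
        rw [← hσ2] <;> ring
  -- Part 2 : optimality. First, the pointwise minimality package.
  have hpack : ∀ j x, x ∈ S j → ∃ t0 t1 : ℝ,
      (∀ k, Tν i x k = if k = e0 then t0 else if k = e1 then t1 else 0) ∧
      |t0 - u j| ≤ m j ∧ |t1| ≤ m j ∧
      (∀ y0 y1 : ℝ,
        ((y0 = (if j = i then u j + r j else u j) ∧ y1 = w j) ∨
         (y0 = (if j = i then u j - r j else u j) ∧ y1 = -(w j))) →
        (x e0 - t0)^2 + (x e1 - t1)^2 ≤ (x e0 - y0)^2 + (x e1 - y1)^2) := by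
    intro j x hxS
    by_cases hji : j = i
    · subst hji
      have hx' := hxS
      rw [hSj j] at hx'
      rw [if_pos (rfl : j = j), if_pos (rfl : j = j)]
      rcases hx' with hx | hx
      · have ht := hTvp x hx
        rw [hboxmem] at hx
        obtain ⟨hx0, hx1, -⟩ := hx
        simp only [Set.mem_Ioo] at hx0 hx1
        refine ⟨u j + r j, w j, ?_, ?_, ?_, ?_⟩
        · intro k; rw [ht]; exact hCpc j k
        · rw [show u j + r j - u j = r j by ring, abs_of_pos (hr j)]; exact hmr j
        · rw [abs_of_pos (hw j)]; exact hmw j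
        · rintro y0 y1 (⟨rfl, rfl⟩ | ⟨rfl, rfl⟩)
          · exact le_of_eq (by ring)
          · have k1 : r j * w j < r j * (x e0 - u j) :=
              mul_lt_mul_of_pos_left (by linarith [hx0.1]) (hr j)
            have k2 : -(r j / 2) * w j < x e1 * w j :=
              mul_lt_mul_of_pos_right hx1.1 (hw j)
            nlinarith [k1, k2, mul_pos (hr j) (hw j)]
      · have ht := hTvm x hx
        rw [hboxmem] at hx
        obtain ⟨hx0, hx1, -⟩ := hx
        simp only [Set.mem_Ioo] at hx0 hx1
        refine ⟨u j - r j, -(w j), ?_, ?_, ?_, ?_⟩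
        · intro k; rw [ht]; exact hCmc j k
        · rw [show u j - r j - u j = -(r j) by ring, abs_neg, abs_of_pos (hr j)]; exact hmr j
        · rw [abs_neg, abs_of_pos (hw j)]; exact hmw j
        · rintro y0 y1 (⟨rfl, rfl⟩ | ⟨rfl, rfl⟩)
          · have k1 : r j * w j < r j * (u j - x e0) :=
              mul_lt_mul_of_pos_left (by linarith [hx0.2]) (hr j)
            have k2 : x e1 * w j < r j / 2 * w j :=
              mul_lt_mul_of_pos_right hx1.2 (hw j)
            nlinarith [k1, k2, mul_pos (hr j) (hw j)]
          · exact le_of_eq (by ring)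
    · have ht := hTvj j hji x hxS
      simp only [if_neg hji]
      by_cases hsg : 0 ≤ x e1
      · rw [if_pos hsg] at ht
        refine ⟨u j, w j, ?_, ?_, ?_, ?_⟩
        · intro k; rw [ht]; exact hBpc j k
        · simp [le_of_lt (hm0 j)]
        · rw [abs_of_pos (hw j)]; exact hmw j
        · rintro y0 y1 (⟨rfl, rfl⟩ | ⟨rfl, rfl⟩)
          · exact le_of_eq (by ring)
          · nlinarith [mul_nonneg hsg (hw j).le]
      · rw [if_neg hsg] at ht
        refine ⟨u j, -(w j), ?_, ?_, ?_, ?_⟩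
        · intro k; rw [ht]; exact hBmc j k
        · simp [le_of_lt (hm0 j)]
        · rw [abs_neg, abs_of_pos (hw j)]; exact hmw j
        · rintro y0 y1 (⟨rfl, rfl⟩ | ⟨rfl, rfl⟩)
          · nlinarith [mul_nonneg (neg_nonneg.2 (le_of_not_ge hsg)) (hw j).le]
          · exact le_of_eq (by ring)
  -- the cross estimate
  have hcrossnum : ∀ (j k : ℕ), k ≠ j → ∀ x : EuclideanSpace ℝ (Fin d), x ∈ S j →
      ∀ t0 t1 y0 y1 : ℝ, |t0 - u j| ≤ m j → |t1| ≤ m j → |y0 - u k| ≤ m k →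
      (x e0 - t0)^2 + (x e1 - t1)^2 ≤ (x e0 - y0)^2 + (x e1 - y1)^2 := by
    intro j k hkj x hxS t0 t1 y0 y1 ht0 ht1 hy0
    obtain ⟨hb0, hb1⟩ := hSbound j x hxS
    rw [abs_le] at ht0 ht1 hy0 hb0 hb1
    have hmj := hm0 j
    have hmk := hm0 k
    have hcr : 8 * m j ≤ |x e0 - y0| := by
      rcases Nat.lt_or_ge j k with h | h
      · have hg := hgap j k h
        have h1 : 8 * m j ≤ y0 - x e0 := by linarith [hy0.1, hb0.2]
        calc 8 * m j ≤ y0 - x e0 := h1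
          _ ≤ |y0 - x e0| := le_abs_self _
          _ = |x e0 - y0| := abs_sub_comm _ _
      · have hkj' : k < j := by omega
        have hg := hgap k j hkj'
        have h1 : 8 * m j ≤ x e0 - y0 := by linarith [hy0.2, hb0.1]
        exact h1.trans (le_abs_self _)
    have h64 : 64 * m j ^ 2 ≤ (x e0 - y0) ^ 2 := by
      have := sq_abs (x e0 - y0)
      nlinarith [hcr, hmj]
    have hsq1 : (x e0 - t0) ^ 2 ≤ 9 * m j ^ 2 := by nlinarith [hb0.1, hb0.2, ht0.1, ht0.2]
    have hsq2 : (x e1 - t1) ^ 2 ≤ 4 * m j ^ 2 := by nlinarith [hb1.1, hb1.2, ht1.1, ht1.2]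
    nlinarith [sq_nonneg (x e1 - y1)]
  -- coordinate extraction helper
  have happly : ∀ (t0 t1 : ℝ) (v : EuclideanSpace ℝ (Fin d)),
      (∀ k', v k' = if k' = e0 then t0 else if k' = e1 then t1 else 0) →
      v e0 = t0 ∧ v e1 = t1 := by
    intro t0 t1 v h
    constructor
    · rw [h e0, if_pos rfl]
    · rw [h e1, if_neg (Ne.symm hne01), if_pos rfl]
  have hfinal : ∀ (x tv yv : EuclideanSpace ℝ (Fin d)) (t0 t1 y0 y1 : ℝ),
      (∀ k', tv k' = if k' = e0 then t0 else if k' = e1 then t1 else 0) →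
      (∀ k', yv k' = if k' = e0 then y0 else if k' = e1 then y1 else 0) →
      ((x e0 - t0)^2 + (x e1 - t1)^2 ≤ (x e0 - y0)^2 + (x e1 - y1)^2) →
      dist x tv ≤ dist x yv := by
    intro x tv yv t0 t1 y0 y1 htv hyv hnum
    refine aux_dist_cmp d e0 e1 hne01 x tv yv ?_ ?_
    · intro k h0 h1
      rw [htv k, if_neg h0, if_neg h1, hyv k, if_neg h0, if_neg h1]
    · rw [(happly _ _ _ htv).1, (happly _ _ _ htv).2,
        (happly _ _ _ hyv).1, (happly _ _ _ hyv).2]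
      exact hnum
  -- coordinates of the atoms of ν i
  have hycp : ∀ k k', (if k = i then Cp k else Bp k) k'
      = if k' = e0 then (if k = i then u k + r k else u k) else if k' = e1 then w k else 0 := by
    intro k k'
    by_cases h : k = i
    · simp only [if_pos h]; exact hCpc k k'
    · simp only [if_neg h]; exact hBpc k k'
  have hycm : ∀ k k', (if k = i then Cm k else Bm k) k'
      = if k' = e0 then (if k = i then u k - r k else u k)
        else if k' = e1 then -(w k) else 0 := by
    intro k k'
    by_cases h : k = i
    · simp only [if_pos h]; exact hCmc k k'
    · simp only [if_neg h]; exact hBmc k k'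
  have hyb : ∀ k : ℕ, |(if k = i then u k + r k else u k) - u k| ≤ m k
      ∧ |(if k = i then u k - r k else u k) - u k| ≤ m k := by
    intro k
    constructor
    · by_cases h : k = i
      · rw [if_pos h, show u k + r k - u k = r k by ring, abs_of_pos (hr k)]; exact hmr k
      · rw [if_neg h]; simp [le_of_lt (hm0 k)]
    · by_cases h : k = i
      · rw [if_pos h, show u k - r k - u k = -(r k) by ring, abs_neg, abs_of_pos (hr k)]
        exact hmr k
      · rw [if_neg h]; simp [le_of_lt (hm0 k)]
  -- the set of atoms
  set At : Set (EuclideanSpace ℝ (Fin d)) :=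
    (Set.range fun j => if j = i then Cp j else Bp j) ∪
    (Set.range fun j => if j = i then Cm j else Bm j) with hAt
  have hAtmeas : MeasurableSet At :=
    ((Set.countable_range _).union (Set.countable_range _)).measurableSet
  -- pointwise optimality
  have hmain : ∀ x ∈ X, ∀ y ∈ At, dist x (Tν i x) ≤ dist x y := by
    intro x hxX y hy
    rw [hX] at hxX
    obtain ⟨j, hxj⟩ := Set.mem_iUnion.1 hxX
    obtain ⟨t0, t1, htc, ht0, ht1, hloc⟩ := hpack j x hxj
    rcases hy with ⟨k, rfl⟩ | ⟨k, rfl⟩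
    · by_cases hkj : k = j
      · subst hkj
        refine hfinal x _ _ t0 t1 _ (w k) htc (hycp k) ?_
        exact hloc _ _ (Or.inl ⟨rfl, rfl⟩)
      · refine hfinal x _ _ t0 t1 _ (w k) htc (hycp k) ?_
        exact hcrossnum j k hkj x hxj t0 t1 _ _ ht0 ht1 (hyb k).1
    · by_cases hkj : k = j
      · subst hkj
        refine hfinal x _ _ t0 t1 _ (-(w k)) htc (hycm k) ?_
        exact hloc _ _ (Or.inr ⟨rfl, rfl⟩)
      · refine hfinal x _ _ t0 t1 _ (-(w k)) htc (hycm k) ?_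
        exact hcrossnum j k hkj x hxj t0 t1 _ _ ht0 ht1 (hyb k).2
  refine ⟨hmap, ?_⟩
  intro S' hS'meas hS'map
  have hνAt : ν i Atᶜ = 0 := by
    rw [hν i, Measure.sum_apply _ hAtmeas.compl]
    refine ENNReal.tsum_eq_zero.2 fun j => ?_
    rw [Measure.smul_apply, Measure.add_apply, Measure.dirac_apply' _ hAtmeas.compl,
      Measure.dirac_apply' _ hAtmeas.compl, smul_eq_mul]
    have h1 : (if j = i then Cp j else Bp j) ∈ At := Or.inl ⟨j, rfl⟩
    have h2 : (if j = i then Cm j else Bm j) ∈ At := Or.inr ⟨j, rfl⟩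
    rw [Set.indicator_of_notMem (by simpa using h1), Set.indicator_of_notMem (by simpa using h2)]
    simp
  have hae1 : ∀ᵐ x ∂ρ, x ∈ X := by
    rw [ae_iff]
    have : {x | ¬ x ∈ X} = Xᶜ := rfl
    rw [this]
    exact hρXc
  have hae2 : ∀ᵐ x ∂ρ, S' x ∈ At := by
    rw [ae_iff]
    have : {x | ¬ S' x ∈ At} = S' ⁻¹' Atᶜ := rfl
    rw [this, ← Measure.map_apply hS'meas hAtmeas.compl, hS'map]
    exact hνAt
  refine lintegral_mono_ae ?_
  filter_upwards [hae1, hae2] with x hx1 hx2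
  exact ENNReal.ofReal_le_ofReal
    (pow_le_pow_left₀ dist_nonneg (hmain x hx1 (S' x) hx2) 2)
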